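/- arXiv:1402.4169 — 5 statements merged into one kernel-verified Lean document; each statement's English description precedes it below -/
import Mathlib

section
/- Let s ∈ V. Then det Δ_ŝ^ŝ (the determinant of the Laplacian with the row and column indexed by s deleted) equals the sum, over all functions f : V∖{s} → V such that for every u ∈ V∖{s} some iterate f^k(u) equals s, of the product Π_{u ∈ V∖{s}} w(u, f(u)). (Matrix-Tree Theorem for directed graphs: the minor counts weighted spanning arborescences rooted at s.) -/
open scoped Classical


lemma powN {V : Type*} [Fintype V] [DecidableEq V] (s : V) (g : V → V) (hgs : g s = s)
    (k : ℕ) (u v : {x : V // x ≠ s}) :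
    ((Matrix.of fun u v : {x : V // x ≠ s} => if g u = (v : V) then (1:ℝ) else 0) ^ k) u v
      = if g^[k] (u : V) = (v : V) then 1 else 0 := by
  induction k generalizing u with
  | zero =>
      simp [Matrix.one_apply, Subtype.ext_iff, Function.iterate_zero, eq_comm]
  | succ k ih =>
      rw [pow_succ', Matrix.mul_apply]
      by_cases h : g (u : V) = s
      · have h1 : ∀ x : {x : V // x ≠ s},
            (Matrix.of fun u v : {x : V // x ≠ s} => if g u = (v : V) then (1:ℝ) else 0) u x = 0 := by
          intro x
          simp only [Matrix.of_apply, h]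
          exact if_neg (fun hx => x.2 hx.symm)
        simp only [h1, zero_mul, Finset.sum_const_zero]
        rw [Function.iterate_succ_apply, h, Function.iterate_fixed hgs]
        exact (if_neg (fun hv => v.2 hv.symm)).symm
      · rw [Finset.sum_eq_single (⟨g (u : V), h⟩ : {x : V // x ≠ s})]
        · simp only [Matrix.of_apply, if_pos rfl, one_mul, ih, if_true]
          rw [Function.iterate_succ_apply]
        · intro x _ hx
          have : g (u : V) ≠ (x : V) := fun hh => hx (Subtype.ext hh.symm)
          simp [Matrix.of_apply, this]
        · intro hmem; exact absurd (Finset.mem_univ _) hmem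

lemma detA {V : Type*} [Fintype V] [DecidableEq V] (s : V) (g : V → V) (hgs : g s = s)
    (h : ∀ u : {x : V // x ≠ s}, ∃ k : ℕ, g^[k] (u : V) = s) :
    (Matrix.of fun u v : {x : V // x ≠ s} =>
      (if (u : V) = (v : V) then (1:ℝ) else 0) - (if g u = (v : V) then 1 else 0)).det = 1 := by
  set N : Matrix {x : V // x ≠ s} {x : V // x ≠ s} ℝ :=
    Matrix.of fun u v : {x : V // x ≠ s} => if g u = (v : V) then (1:ℝ) else 0 with hN
  have hE : (Matrix.of fun u v : {x : V // x ≠ s} =>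
      (if (u : V) = (v : V) then (1:ℝ) else 0) - (if g u = (v : V) then 1 else 0)) = 1 - N := by
    ext u v
    simp [hN, Matrix.one_apply, Subtype.ext_iff]
  rw [hE]
  -- N is nilpotent
  set K : ℕ := Finset.univ.sup fun u : {x : V // x ≠ s} => Nat.find (h u) with hK
  have hKs : ∀ u : {x : V // x ≠ s}, g^[K] (u : V) = s := by
    intro u
    have h1 : Nat.find (h u) ≤ K := by
      rw [hK]; exact Finset.le_sup (f := fun u : {x : V // x ≠ s} => Nat.find (h u)) (Finset.mem_univ u)
    have h2 : g^[Nat.find (h u)] (u : V) = s := Nat.find_spec (h u)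
    have : K = (K - Nat.find (h u)) + Nat.find (h u) := (Nat.sub_add_cancel h1).symm
    rw [this, Function.iterate_add_apply, h2, Function.iterate_fixed hgs]
  have hnil : IsNilpotent N := by
    refine ⟨K, ?_⟩
    ext u v
    rw [powN s g hgs K u v]
    have hv : s ≠ (v : V) := Ne.symm v.2
    simp [hKs u, hv]
  -- charpoly of nilpotent matrix
  have hchar : N.charpoly = Polynomial.X ^ Fintype.card {x : V // x ≠ s} := by
    have := (Matrix.isNilpotent_charpoly_sub_pow_of_isNilpotent hnil).eq_zero
    linear_combination this
  have hdet : (1 - N).det = Polynomial.eval (1:ℝ) N.charpoly := by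
    rw [Matrix.charpoly, ← Polynomial.coe_evalRingHom, RingHom.map_det]
    congr 1
    ext u v
    by_cases huv : u = v
    · subst huv
      simp [Matrix.charmatrix_apply, Matrix.one_apply]
    · simp [Matrix.charmatrix_apply, Matrix.one_apply, huv, Matrix.diagonal_apply_ne _ huv]
  rw [hdet, hchar]
  simp

lemma detB {V : Type*} [Fintype V] [DecidableEq V] (s : V) (g : V → V) (hgs : g s = s)
    (h : ∃ u : {x : V // x ≠ s}, ∀ k : ℕ, g^[k] (u : V) ≠ s) :
    (Matrix.of fun u v : {x : V // x ≠ s} =>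
      (if (u : V) = (v : V) then (1:ℝ) else 0) - (if g u = (v : V) then 1 else 0)).det = 0 := by
  obtain ⟨u0, hu0⟩ := h
  set E : Matrix {x : V // x ≠ s} {x : V // x ≠ s} ℝ :=
    Matrix.of fun u v : {x : V // x ≠ s} =>
      (if (u : V) = (v : V) then (1:ℝ) else 0) - (if g u = (v : V) then 1 else 0) with hEdef
  -- find a cycle
  obtain ⟨i, j, hij, hteq⟩ :=
    Finite.exists_ne_map_eq_of_infinite (fun k : ℕ => (⟨g^[k] (u0 : V), hu0 k⟩ : {x : V // x ≠ s}))
  wlog hlt : i < j generalizing i j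
  · exact this j i hij.symm hteq.symm (by omega)
  have hteq' : g^[i] (u0 : V) = g^[j] (u0 : V) := congrArg Subtype.val hteq
  set a : V := g^[i] (u0 : V) with ha
  set p : ℕ := j - i with hp
  have hp0 : 0 < p := by omega
  have hak : ∀ k : ℕ, g^[k] a ≠ s := by
    intro k
    rw [ha, ← Function.iterate_add_apply]
    exact hu0 (k + i)
  have hper : g^[p] a = a := by
    rw [ha, ← Function.iterate_add_apply]
    have : p + i = j := by omega
    rw [this, ← hteq']
  set c : ℕ → {x : V // x ≠ s} := fun k => ⟨g^[k] a, hak k⟩ with hc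
  have hcp : ∀ k, c (k + p) = c k := by
    intro k
    apply Subtype.ext
    show g^[k + p] a = g^[k] a
    rw [Function.iterate_add_apply, hper]
  have hshift : ∀ k l, c k = c l → ∀ m, c (m + k) = c (m + l) := by
    intro k l hkl m
    apply Subtype.ext
    show g^[m + k] a = g^[m + l] a
    rw [Function.iterate_add_apply, Function.iterate_add_apply]
    exact congrArg (g^[m]) (congrArg Subtype.val hkl)
  set C : Finset {x : V // x ≠ s} := (Finset.range p).image c with hC
  have hmemC : ∀ k, c k ∈ C := by
    have hmul : ∀ m k, c (k + m * p) = c k := by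
      intro m
      induction m with
      | zero => intro k; simp
      | succ m ih =>
          intro k
          have : k + (m + 1) * p = (k + m * p) + p := by ring
          rw [this, hcp, ih]
    intro k
    have h1 : c k = c (k % p) := by
      conv_lhs => rw [(Nat.mod_add_div' k p).symm]
      exact hmul _ _
    rw [h1, hC]
    exact Finset.mem_image_of_mem c (Finset.mem_range.mpr (Nat.mod_lt _ hp0))
  set σ : {x : V // x ≠ s} → {x : V // x ≠ s} :=
    fun u => if hgu : g (u : V) = s then u else ⟨g (u : V), hgu⟩ with hσ
  have hσc : ∀ k, σ (c k) = c (k + 1) := by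
    intro k
    have h1 : g ((c k : V)) = g^[k + 1] a := by
      show g (g^[k] a) = g^[k+1] a
      rw [Function.iterate_succ_apply']
    rw [hσ]
    simp only [h1]
    rw [dif_neg (hak (k + 1))]
  have hinj : Set.InjOn σ C := by
    intro u hu v hv huv
    obtain ⟨k, hk, rfl⟩ := Finset.mem_image.mp hu
    obtain ⟨l, hl, rfl⟩ := Finset.mem_image.mp hv
    rw [hσc, hσc] at huv
    have h2 := hshift _ _ huv (p - 1)
    have e1 : p - 1 + (k + 1) = k + p := by omega
    have e2 : p - 1 + (l + 1) = l + p := by omega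
    rw [e1, e2, hcp, hcp] at h2
    exact h2
  have himg : C.image σ = C := by
    apply Finset.eq_of_subset_of_card_le
    · intro u hu
      obtain ⟨v, hv, rfl⟩ := Finset.mem_image.mp hu
      obtain ⟨k, hk, rfl⟩ := Finset.mem_image.mp hv
      rw [hσc]
      exact hmemC _
    · rw [Finset.card_image_of_injOn hinj]
  have hgC : ∀ u ∈ C, (σ u : V) = g (u : V) := by
    intro u hu
    obtain ⟨k, hk, rfl⟩ := Finset.mem_image.mp hu
    rw [hσc]
    show g^[k+1] a = g ((c k : V))
    show g^[k+1] a = g (g^[k] a)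
    rw [Function.iterate_succ_apply']
  -- the indicator vector of C is in the left kernel
  have hker : Matrix.vecMul (fun u => if u ∈ C then (1:ℝ) else 0) E = 0 := by
    funext v
    show ∑ u, (if u ∈ C then (1:ℝ) else 0) * E u v = 0
    simp only [ite_mul, one_mul, zero_mul]
    rw [Finset.sum_ite_mem, Finset.univ_inter]
    have split : ∀ u ∈ C, E u v
        = (if u = v then (1:ℝ) else 0) - (if σ u = v then 1 else 0) := by
      intro u hu
      have h1 : ((u : V) = (v : V)) = (u = v) := by
        simp [Subtype.ext_iff]
      have h2 : (g (u : V) = (v : V)) = (σ u = v) := by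
        rw [← hgC u hu]
        simp [Subtype.ext_iff]
      rw [hEdef]
      simp only [Matrix.of_apply, h1, h2]
    rw [Finset.sum_congr rfl split, Finset.sum_sub_distrib]
    have hS2 : ∑ u ∈ C, (if σ u = v then (1:ℝ) else 0)
        = ∑ u ∈ C.image σ, (if u = v then (1:ℝ) else 0) :=
      (Finset.sum_image (f := fun u => if u = v then (1:ℝ) else 0) (g := σ) (fun x hx y hy hxy => hinj hx hy hxy)).symm
    rw [hS2, himg, sub_self]
  have hne : (fun u => if u ∈ C then (1:ℝ) else 0) ≠ 0 := by
    intro h0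
    have := congrFun h0 (c 0)
    rw [if_pos (hmemC 0)] at this
    exact one_ne_zero this
  exact Matrix.exists_vecMul_eq_zero_iff.mp ⟨_, hne, hker⟩

/-- **Matrix-Tree Theorem for directed graphs.**  For a finite vertex set `V` with at
least two elements, nonnegative directed edge weights `w` vanishing on the diagonal,
and a vertex `s`, the determinant of the directed Laplacian with row and column `s`
deleted equals the weighted number of spanning arborescences rooted at `s`, i.e. the
sum over all functions `f : V∖{s} → V` such that every `u ≠ s` reaches `s` under
iteration, of `∏_{u ≠ s} w(u, f(u))`. -/
theorem stmt_0 {V : Type*} [Fintype V] [DecidableEq V]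
    (hV : 1 < Fintype.card V)
    (w : V → V → ℝ) (hw : ∀ u v, 0 ≤ w u v) (hw0 : ∀ v, w v v = 0)
    (s : V) :
    (Matrix.of fun u v : {x : V // x ≠ s} =>
        if (u : V) = (v : V)
          then ∑ x ∈ Finset.univ.filter (fun x => x ≠ (u : V)), w u x
          else -(w u v)).det
    = ∑ f ∈ Finset.univ.filter
        (fun f : {x : V // x ≠ s} → V =>
          ∀ u : {x : V // x ≠ s},
            ∃ k : ℕ, (fun v : V => if h : v = s then s else f ⟨v, h⟩)^[k] (u : V) = s),
        ∏ u : {x : V // x ≠ s}, w u (f u) := by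
  classical
  set r : {x : V // x ≠ s} → V → ({x : V // x ≠ s} → ℝ) :=
    fun u x => fun v => (if (u : V) = (v : V) then (1:ℝ) else 0) - (if x = (v : V) then 1 else 0)
    with hr
  have hrows : (Matrix.of fun u v : {x : V // x ≠ s} =>
        if (u : V) = (v : V)
          then ∑ x ∈ Finset.univ.filter (fun x => x ≠ (u : V)), w u x
          else -(w u v))
      = Matrix.of fun u v : {x : V // x ≠ s} => (∑ x : V, w u x • r u x) v := by
    funext u v
    simp only [Matrix.of_apply, Finset.sum_apply, Pi.smul_apply, smul_eq_mul, hr]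
    by_cases huv : (u : V) = (v : V)
    · rw [if_pos huv]
      simp only [mul_sub, Finset.sum_sub_distrib, mul_ite, mul_one, mul_zero,
        Finset.sum_ite_eq', Finset.mem_univ, if_true]
      rw [Finset.filter_ne', Finset.sum_erase_eq_sub (Finset.mem_univ _)]
      rw [← huv, hw0]
      simp
    · rw [if_neg huv]
      simp only [mul_sub, Finset.sum_sub_distrib, mul_ite, mul_one, mul_zero,
        Finset.sum_ite_eq', Finset.mem_univ, if_true, zero_sub, neg_inj]
      simp [huv]
  have hdetRow : ∀ M : Matrix {x : V // x ≠ s} {x : V // x ≠ s} ℝ,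
      M.det = (Matrix.detRowAlternating :
        ({x : V // x ≠ s} → ℝ) [⋀^{x : V // x ≠ s}]→ₗ[ℝ] ℝ).toMultilinearMap M :=
    fun _ => rfl
  have expand : (Matrix.of fun u v : {x : V // x ≠ s} =>
        if (u : V) = (v : V)
          then ∑ x ∈ Finset.univ.filter (fun x => x ≠ (u : V)), w u x
          else -(w u v)).det
      = ∑ f : {x : V // x ≠ s} → V, (∏ u : {x : V // x ≠ s}, w u (f u)) *
          (Matrix.of fun u v : {x : V // x ≠ s} =>
            (if (u : V) = (v : V) then (1:ℝ) else 0) - (if f u = (v : V) then 1 else 0)).det := by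
    rw [hrows, hdetRow]
    have h1 : (Matrix.detRowAlternating :
        ({x : V // x ≠ s} → ℝ) [⋀^{x : V // x ≠ s}]→ₗ[ℝ] ℝ).toMultilinearMap
          (fun u : {x : V // x ≠ s} => ∑ x : V, w u x • r u x)
        = ∑ f : {x : V // x ≠ s} → V, (Matrix.detRowAlternating :
            ({x : V // x ≠ s} → ℝ) [⋀^{x : V // x ≠ s}]→ₗ[ℝ] ℝ).toMultilinearMap
            (fun u : {x : V // x ≠ s} => w u (f u) • r u (f u)) :=
      MultilinearMap.map_sum _ (fun (u : {x : V // x ≠ s}) (x : V) => w u x • r u x)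
    have h0 : (Matrix.of fun u v : {x : V // x ≠ s} => (∑ x : V, w u x • r u x) v)
        = (fun u : {x : V // x ≠ s} => ∑ x : V, w u x • r u x) := rfl
    rw [h0, h1]
    refine Finset.sum_congr rfl fun f _ => ?_
    rw [MultilinearMap.map_smul_univ]
    rw [smul_eq_mul]
    rfl
  rw [expand, Finset.sum_filter]
  refine Finset.sum_congr rfl fun f _ => ?_
  have hEg : (Matrix.of fun u v : {x : V // x ≠ s} =>
        (if (u : V) = (v : V) then (1:ℝ) else 0) - (if f u = (v : V) then 1 else 0))
      = Matrix.of fun u v : {x : V // x ≠ s} =>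
        (if (u : V) = (v : V) then (1:ℝ) else 0)
          - (if (fun v : V => if h : v = s then s else f ⟨v, h⟩) (u : V) = (v : V) then 1 else 0) := by
    funext u v
    simp only [Matrix.of_apply, u.2, dif_neg, Subtype.eta]
    simp
  by_cases hP : ∀ u : {x : V // x ≠ s},
      ∃ k : ℕ, (fun v : V => if h : v = s then s else f ⟨v, h⟩)^[k] (u : V) = s
  · rw [if_pos hP, hEg,
      detA s (fun v : V => if h : v = s then s else f ⟨v, h⟩) (dif_pos rfl) hP, mul_one]
  · rw [if_neg hP, hEg,
      detB s (fun v : V => if h : v = s then s else f ⟨v, h⟩) (dif_pos rfl) (by push_neg at hP; obtain ⟨u, hu⟩ := hP; exact ⟨u, fun k => hu k⟩), mul_zero]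
end

section
/- The sum, over all connected adjacency maps f of G, of (number of periodic points of f) times the weight of f, equals 2 · (Σ_{{u,v} ∈ E} w(u,v)) · F₁(G), where F₁(G) is the weighted sum of spanning trees of G. (Bijectively: marked oriented cycle-rooted spanning trees correspond to pairs consisting of a spanning tree and a directed edge.) -/
open scoped Classical

/-- The weighted sum `F₁(G)` of spanning trees of `G`. -/
noncomputable def treeSum {V : Type*} [Fintype V] [DecidableEq V]
    (w : V → V → ℝ) (hsym : ∀ u v, w u v = w v u) (G : SimpleGraph V) : ℝ :=
  ∑ T ∈ Finset.univ.filter (fun T : Finset (Sym2 V) =>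
      (T : Set (Sym2 V)) ⊆ G.edgeSet ∧
      (SimpleGraph.fromEdgeSet (T : Set (Sym2 V))).Connected ∧
      (SimpleGraph.fromEdgeSet (T : Set (Sym2 V))).IsAcyclic),
    ∏ e ∈ T, Sym2.lift ⟨w, hsym⟩ e

/-!
Cut the functional graph of a connected adjacency map `f` at a periodic point `v`: the edges
`{x, f x}` with `x ≠ v` form a spanning tree, in which `f` is the parent map towards the root `v`,
and the remaining edge is the directed edge `(v, f v)`. Conversely, a spanning tree together with a
directed edge `(u, v)` gives back `f` by orienting the tree towards `u` and sending `u` to `v`.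
This bijection preserves weights, and every edge of `G` carries two directed edges.
-/

open Finset Function SimpleGraph

namespace AdjacencyMap

variable {V : Type*}

def IsRootedAt (g : V → V) (r : V) : Prop := ∀ x, ∃ k, g^[k] x = r

section Rooted

variable {g : V → V} {r : V}

theorem isRootedAt_of_lt (φ : V → ℕ) (hφ : ∀ x ≠ r, φ (g x) < φ x) :
    IsRootedAt g r := by
  intro x
  induction hn : φ x using Nat.strong_induction_on generalizing x with
  | _ n ih =>
    by_cases hx : x = r
    · exact ⟨0, hx⟩
    obtain ⟨k, hk⟩ := ih _ (hn ▸ hφ x hx) (g x) rfl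
    exact ⟨k + 1, by rwa [iterate_succ_apply]⟩

namespace IsRootedAt

theorem mem_periodicPts (h : IsRootedAt g r) : r ∈ periodicPts g := by
  obtain ⟨k, hk⟩ := h (g r)
  exact mk_mem_periodicPts k.succ_pos (by rw [IsPeriodicPt, IsFixedPt, iterate_succ_apply, hk])

theorem apply_ne_self (h : IsRootedAt g r) {x : V} (hx : x ≠ r) : g x ≠ x := fun hfix => by
  obtain ⟨k, hk⟩ := h x
  exact hx (by rwa [iterate_fixed hfix] at hk)

theorem injOn_edge (h : IsRootedAt g r) : Set.InjOn (fun x => s(x, g x)) {r}ᶜ := by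
  intro x hx y hy hxy
  rcases Sym2.eq_iff.mp hxy with ⟨hxy, -⟩ | ⟨hx', hy'⟩
  · exact hxy
  -- a 2-cycle `x ↦ g x ↦ x` avoiding `r` would never reach `r`
  have hper : IsPeriodicPt g 2 x := by
    change g (g x) = x
    rw [hy', hx']
  obtain ⟨k, hk⟩ := h x
  rw [← hper.iterate_mod_apply] at hk
  rcases Nat.mod_two_eq_zero_or_one k with h0 | h1
  · exact (hx (by simpa [h0] using hk)).elim
  · exact (hy (by simpa [h1, hy'] using hk)).elim

end IsRootedAt

theorem isRootedAt_of_connected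
    (hconn : (fromEdgeSet (Set.range fun x => s(x, g x))).Connected)
    (hr : r ∈ periodicPts g) : IsRootedAt g r := by
  have reaches_apply_iff : ∀ y, (∃ k, g^[k] (g y) = r) ↔ ∃ k, g^[k] y = r := by
    refine fun y => ⟨fun ⟨k, hk⟩ => ⟨k + 1, hk⟩, ?_⟩
    rintro ⟨_ | k, hk⟩
    · obtain ⟨n, hn, hper⟩ := hr
      obtain rfl : y = r := hk
      refine ⟨n - 1, ?_⟩
      rw [← iterate_succ_apply, Nat.succ_eq_add_one, Nat.sub_one_add_one hn.ne', hper.eq]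
    · exact ⟨k, hk⟩
  have invariant : ∀ {a b} (p : (fromEdgeSet (Set.range fun x => s(x, g x))).Walk a b),
      (∃ k, g^[k] a = r) ↔ ∃ k, g^[k] b = r := by
    intro a b p
    induction p with
    | nil => rfl
    | cons hadj _ ih =>
      obtain ⟨⟨z, hz⟩, -⟩ := (fromEdgeSet_adj _).mp hadj
      rcases Sym2.eq_iff.mp hz with ⟨rfl, rfl⟩ | ⟨rfl, rfl⟩ <;> rw [← ih, reaches_apply_iff]
  intro x
  obtain ⟨p⟩ := hconn.preconnected x r
  exact (invariant p).mpr ⟨0, rfl⟩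

end Rooted

section Paths

variable {H : SimpleGraph V} {g : V → V} {r : V}

theorem reachable_of_iterate_eq (hadj : ∀ x ≠ r, H.Adj x (g x)) :
    ∀ (k : ℕ) (x : V), g^[k] x = r → H.Reachable x r
  | 0, _, hx => hx ▸ Reachable.refl _
  | k + 1, x, hx => by
    by_cases hxr : x = r
    · exact hxr ▸ Reachable.refl _
    · exact (hadj x hxr).reachable.trans (reachable_of_iterate_eq hadj k (g x) hx)

theorem IsRootedAt.connected (h : IsRootedAt g r)
    (hadj : ∀ x ≠ r, H.Adj x (g x)) : H.Connected :=
  have : Nonempty V := ⟨r⟩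
  have hreach (x : V) : H.Reachable x r := by
    obtain ⟨k, hk⟩ := h x
    exact reachable_of_iterate_eq hadj k x hk
  .mk fun x y => (hreach x).trans (hreach y).symm

theorem exists_isPath_of_iterate_eq (hadj : ∀ x ≠ r, H.Adj x (g x)) :
    ∀ (k : ℕ) (x : V), g^[k] x = r → (∀ j < k, g^[j] x ≠ r) →
      ∃ p : H.Walk x r, p.IsPath ∧ (∀ y ∈ p.support, ∃ j ≤ k, g^[j] x = y) ∧
        (x ≠ r → p.snd = g x)
  | 0, x, hx, _ => by
    obtain rfl : x = r := hx
    exact ⟨.nil, .nil, fun y hy => ⟨0, le_rfl, (List.mem_singleton.mp hy).symm⟩,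
      fun h => (h rfl).elim⟩
  | k + 1, x, hx, hmin => by
    have hxr : x ≠ r := hmin 0 k.succ_pos
    obtain ⟨q, hq, hsupp, -⟩ := exists_isPath_of_iterate_eq hadj k (g x) hx
      fun j hj => hmin (j + 1) (by omega)
    have hxq : x ∉ q.support := by
      intro hxq
      obtain ⟨j, hj, hper⟩ := hsupp x hxq
      -- `x` would be periodic with period `j + 1`, so `r` would already be hit at time `k - j`
      apply hmin (k - j) (by omega)
      rw [← hx, show k + 1 = (k - j) + (j + 1) by omega, iterate_add_apply,
        iterate_succ_apply, hper]
    refine ⟨.cons (hadj x hxr) q, hq.cons hxq, ?_, fun _ => Walk.snd_cons _ _⟩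
    intro y hy
    rcases List.mem_cons.mp hy with rfl | hy
    · exact ⟨0, Nat.zero_le _, rfl⟩
    · obtain ⟨j, hj, rfl⟩ := hsupp y hy
      exact ⟨j + 1, by omega, rfl⟩

theorem IsRootedAt.exists_isPath (h : IsRootedAt g r) (hadj : ∀ x ≠ r, H.Adj x (g x))
    (x : V) : ∃ p : H.Walk x r, p.IsPath ∧ (x ≠ r → p.snd = g x) := by
  obtain ⟨p, hp, -, hsnd⟩ := exists_isPath_of_iterate_eq hadj _ x (Nat.find_spec (h x))
    fun j hj => Nat.find_min (h x) hj
  exact ⟨p, hp, hsnd⟩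

theorem _root_.SimpleGraph.IsAcyclic.eq_of_isRootedAt (hH : H.IsAcyclic) {g₁ g₂ : V → V}
    (h₁ : IsRootedAt g₁ r) (h₂ : IsRootedAt g₂ r) (hadj₁ : ∀ x ≠ r, H.Adj x (g₁ x))
    (hadj₂ : ∀ x ≠ r, H.Adj x (g₂ x)) {x : V} (hx : x ≠ r) : g₁ x = g₂ x := by
  obtain ⟨p₁, hp₁, hsnd₁⟩ := h₁.exists_isPath hadj₁ x
  obtain ⟨p₂, hp₂, hsnd₂⟩ := h₂.exists_isPath hadj₂ x
  have hp : p₁ = p₂ :=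
    congrArg Subtype.val ((hH.subsingleton_path x r).elim ⟨p₁, hp₁⟩ ⟨p₂, hp₂⟩)
  rw [← hsnd₁ hx, ← hsnd₂ hx, hp]

end Paths

theorem _root_.SimpleGraph.edgeSet_fromEdgeSet_of_subset {G : SimpleGraph V} {s : Set (Sym2 V)}
    (hs : s ⊆ G.edgeSet) : (fromEdgeSet s).edgeSet = s :=
  (edgeSet_fromEdgeSet s).trans <| sdiff_eq_left.mpr <|
    Set.disjoint_left.mpr fun _ he => G.not_isDiag_of_mem_edgeSet (hs he)

section ParentEdges

variable [Fintype V] [DecidableEq V] {g : V → V} {r : V}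

def parentEdges (g : V → V) (r : V) : Finset (Sym2 V) :=
  (univ.erase r).image fun x => s(x, g x)

theorem parentEdges_subset_edgeSet {G : SimpleGraph V} (hadj : ∀ x ≠ r, G.Adj x (g x)) :
    (parentEdges g r : Set (Sym2 V)) ⊆ G.edgeSet := by
  intro e he
  obtain ⟨x, hx, rfl⟩ := mem_image.mp he
  exact hadj x (ne_of_mem_erase hx)

namespace IsRootedAt

theorem card_parentEdges (h : IsRootedAt g r) : #(parentEdges g r) + 1 = Fintype.card V := by
  rw [parentEdges, card_image_of_injOn (h.injOn_edge.mono (by simp)),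
    card_erase_add_one (mem_univ r), card_univ]

theorem adj_parentEdges (h : IsRootedAt g r) {x : V} (hx : x ≠ r) :
    (fromEdgeSet (parentEdges g r : Set (Sym2 V))).Adj x (g x) :=
  (fromEdgeSet_adj _).mpr ⟨mem_image.mpr ⟨x, mem_erase.mpr ⟨hx, mem_univ x⟩, rfl⟩,
    (h.apply_ne_self hx).symm⟩

theorem edgeSet_fromEdgeSet_parentEdges (h : IsRootedAt g r) :
    (fromEdgeSet (parentEdges g r : Set (Sym2 V))).edgeSet = parentEdges g r :=
  edgeSet_fromEdgeSet_of_subset (parentEdges_subset_edgeSet fun _ => h.adj_parentEdges)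

theorem isTree_parentEdges (h : IsRootedAt g r) :
    (fromEdgeSet (parentEdges g r : Set (Sym2 V))).IsTree := by
  rw [isTree_iff_connected_and_card, h.edgeSet_fromEdgeSet_parentEdges, Nat.card_coe_set_eq,
    Set.ncard_coe_finset, Nat.card_eq_fintype_card, h.card_parentEdges]
  exact ⟨h.connected fun _ => h.adj_parentEdges, rfl⟩

theorem prod_eq_mul_prod_parentEdges {M : Type*} [CommMonoid M] (h : IsRootedAt g r)
    (w : V → V → M) (hsym : ∀ u v, w u v = w v u) :
    ∏ x, w x (g x) = w r (g r) * ∏ e ∈ parentEdges g r, Sym2.lift ⟨w, hsym⟩ e := by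
  rw [← mul_prod_erase univ _ (mem_univ r), parentEdges,
    prod_image (h.injOn_edge.mono (by simp))]
  rfl

end IsRootedAt

end ParentEdges

section TowardRoot

variable {H : SimpleGraph V} {r : V}

theorem _root_.SimpleGraph.Connected.exists_adj_dist_lt (hH : H.Connected) {x : V} (hx : x ≠ r) :
    ∃ y, H.Adj x y ∧ H.dist y r < H.dist x r := by
  obtain ⟨p, hp⟩ := hH.exists_walk_length_eq_dist x r
  have hnil : ¬ p.Nil := Walk.not_nil_of_ne hx
  refine ⟨p.snd, p.adj_snd hnil, ?_⟩
  have := dist_le p.tail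
  have := p.length_tail_add_one hnil
  omega

-- In a tree this is the parent of `x` for the root `r`.
noncomputable def towardRoot (H : SimpleGraph V) (r x : V) : V :=
  if h : ∃ y, H.Adj x y ∧ H.dist y r < H.dist x r then h.choose else x

theorem _root_.SimpleGraph.Connected.adj_towardRoot (hH : H.Connected) {x : V} (hx : x ≠ r) :
    H.Adj x (towardRoot H r x) ∧ H.dist (towardRoot H r x) r < H.dist x r := by
  have h := hH.exists_adj_dist_lt hx
  rw [towardRoot, dif_pos h]
  exact h.choose_spec

theorem _root_.SimpleGraph.Connected.isRootedAt_update_towardRoot [DecidableEq V]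
    (hH : H.Connected) (v : V) :
    IsRootedAt (update (towardRoot H r) r v) r :=
  isRootedAt_of_lt (H.dist · r) fun x hx => by
    rw [update_of_ne hx]
    exact (hH.adj_towardRoot hx).2

end TowardRoot

theorem _root_.SimpleGraph.sum_darts_edge {M : Type*} [AddCommMonoid M] [Fintype V]
    [DecidableEq V] (G : SimpleGraph V) [DecidableRel G.Adj] (F : Sym2 V → M) :
    ∑ d : G.Dart, F d.edge = 2 • ∑ e ∈ G.edgeFinset, F e := by
  rw [← sum_fiberwise_of_maps_to (g := Dart.edge) fun d _ => mem_edgeFinset.mpr d.edge_mem,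
    smul_sum]
  refine sum_congr rfl fun e he => ?_
  rw [sum_congr rfl fun d hd => congrArg F (mem_filter.mp hd).2, sum_const,
    G.dart_edge_fiber_card e (mem_edgeFinset.mp he)]

section Bijection

variable [Fintype V] [DecidableEq V]

noncomputable def connectedAdjacencyMaps (G : SimpleGraph V) : Finset (V → V) :=
  univ.filter fun f : V → V =>
    (∀ v, G.Adj v (f v)) ∧ (fromEdgeSet (Set.range fun v => s(v, f v))).Connected

noncomputable def spanningTrees (G : SimpleGraph V) : Finset (Finset (Sym2 V)) :=
  univ.filter fun T : Finset (Sym2 V) =>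
    (T : Set (Sym2 V)) ⊆ G.edgeSet ∧
      (fromEdgeSet (T : Set (Sym2 V))).Connected ∧ (fromEdgeSet (T : Set (Sym2 V))).IsAcyclic

variable {G : SimpleGraph V}

theorem mem_connectedAdjacencyMaps {f : V → V} :
    f ∈ connectedAdjacencyMaps G ↔
      (∀ v, G.Adj v (f v)) ∧ (fromEdgeSet (Set.range fun v => s(v, f v))).Connected := by
  simp [connectedAdjacencyMaps]

theorem mem_spanningTrees {T : Finset (Sym2 V)} :
    T ∈ spanningTrees G ↔
      (T : Set (Sym2 V)) ⊆ G.edgeSet ∧ (fromEdgeSet (T : Set (Sym2 V))).IsTree := by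
  simp [spanningTrees, isTree_iff]

theorem IsRootedAt.parentEdges_mem_spanningTrees {f : V → V} {v : V} (h : IsRootedAt f v)
    (hadj : ∀ x, G.Adj x (f x)) : parentEdges f v ∈ spanningTrees G :=
  mem_spanningTrees.mpr ⟨parentEdges_subset_edgeSet fun x _ => hadj x, h.isTree_parentEdges⟩

theorem update_towardRoot_mem_connectedAdjacencyMaps {T : Finset (Sym2 V)}
    (hT : T ∈ spanningTrees G) (d : G.Dart) :
    update (towardRoot (fromEdgeSet (T : Set (Sym2 V))) d.fst) d.fst d.snd ∈
      connectedAdjacencyMaps G := by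
  obtain ⟨hTG, hT⟩ := mem_spanningTrees.mp hT
  have hroot := hT.connected.isRootedAt_update_towardRoot (r := d.fst) d.snd
  refine mem_connectedAdjacencyMaps.mpr ⟨fun x => ?_, ?_⟩
  · by_cases hx : x = d.fst
    · subst hx
      simp [d.adj]
    · rw [update_of_ne hx]
      exact (fromEdgeSet_mono hTG).trans (fromEdgeSet_edgeSet G).le
        (hT.connected.adj_towardRoot hx).1
  · refine hroot.isTree_parentEdges.connected.mono (fromEdgeSet_mono ?_)
    intro e he
    obtain ⟨x, -, rfl⟩ := mem_image.mp he
    exact Set.mem_range_self x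

theorem _root_.SimpleGraph.IsTree.coe_parentEdges_update_towardRoot {H : SimpleGraph V}
    (hH : H.IsTree) (u v : V) :
    (parentEdges (update (towardRoot H u) u v) u : Set (Sym2 V)) = H.edgeSet := by
  have hroot := hH.connected.isRootedAt_update_towardRoot (r := u) v
  rw [← coe_edgeFinset, coe_inj]
  refine eq_of_subset_of_card_le (fun e he => mem_edgeFinset.mpr ?_) ?_
  · refine parentEdges_subset_edgeSet (fun x hx => ?_) he
    rw [update_of_ne hx]
    exact (hH.connected.adj_towardRoot hx).1
  · have := hroot.card_parentEdges
    have := hH.card_edgeFinset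
    omega

theorem IsRootedAt.update_towardRoot_parentEdges {f : V → V} {v : V} (h : IsRootedAt f v) :
    update (towardRoot (fromEdgeSet (parentEdges f v : Set (Sym2 V))) v) v (f v) = f := by
  have hT := h.isTree_parentEdges
  funext x
  by_cases hx : x = v
  · rw [hx, update_self]
  · refine hT.isAcyclic.eq_of_isRootedAt (hT.connected.isRootedAt_update_towardRoot (f v)) h
      (fun y hy => ?_) (fun _ => h.adj_parentEdges) hx
    rw [update_of_ne hy]
    exact (hT.connected.adj_towardRoot hy).1

theorem sum_sigma_periodicPts_eq_sum_darts_spanningTrees {R : Type*} [CommSemiring R]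
    (w : V → V → R) (hsym : ∀ u v, w u v = w v u) :
    ∑ q ∈ (connectedAdjacencyMaps G).sigma (fun f => univ.filter (· ∈ periodicPts f)),
        ∏ x, w x (q.1 x) =
      ∑ r ∈ (univ : Finset G.Dart) ×ˢ spanningTrees G,
        w r.1.fst r.1.snd * ∏ e ∈ r.2, Sym2.lift ⟨w, hsym⟩ e := by
  have rooted {q : (_ : V → V) × V} (hq : q ∈ (connectedAdjacencyMaps G).sigma
      (fun f => univ.filter (· ∈ periodicPts f))) : IsRootedAt q.1 q.2 := by
    simp only [mem_sigma, mem_connectedAdjacencyMaps, mem_filter, mem_univ, true_and] at hq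
    exact isRootedAt_of_connected hq.1.2 hq.2
  refine sum_bij'
    (fun q hq => (⟨(q.2, q.1 q.2), (mem_connectedAdjacencyMaps.mp (mem_sigma.mp hq).1).1 q.2⟩,
      parentEdges q.1 q.2))
    (fun r _ => ⟨update (towardRoot (fromEdgeSet (r.2 : Set (Sym2 V))) r.1.fst) r.1.fst r.1.snd,
      r.1.fst⟩)
    (fun q hq => mem_product.mpr ⟨mem_univ _, (rooted hq).parentEdges_mem_spanningTrees
      (mem_connectedAdjacencyMaps.mp (mem_sigma.mp hq).1).1⟩)
    (fun r hr => ?_) (fun q hq => ?_) (fun r hr => ?_) (fun q hq => ?_)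
  · obtain ⟨-, hT⟩ := mem_product.mp hr
    refine mem_sigma.mpr ⟨update_towardRoot_mem_connectedAdjacencyMaps hT r.1, ?_⟩
    exact mem_filter.mpr ⟨mem_univ _,
      ((mem_spanningTrees.mp hT).2.connected.isRootedAt_update_towardRoot _).mem_periodicPts⟩
  · simp only [(rooted hq).update_towardRoot_parentEdges]
  · obtain ⟨hTG, hT⟩ := mem_spanningTrees.mp (mem_product.mp hr).2
    refine Prod.ext (Dart.ext _ _ (Prod.ext rfl (update_self ..))) (coe_injective ?_)
    simp only [hT.coe_parentEdges_update_towardRoot, edgeSet_fromEdgeSet_of_subset hTG]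
  · exact (rooted hq).prod_eq_mul_prod_parentEdges w hsym

end Bijection

end AdjacencyMap

open AdjacencyMap

theorem stmt_6_general {V : Type*} [Fintype V] [DecidableEq V]
    (w : V → V → ℝ) (hsym : ∀ u v, w u v = w v u)
    (G : SimpleGraph V) :
    ∑ f ∈ Finset.univ.filter (fun f : V → V =>
        (∀ v, G.Adj v (f v)) ∧
        (SimpleGraph.fromEdgeSet (Set.range fun v => Sym2.mk v (f v))).Connected),
      (((Finset.univ.filter (fun v : V => ∃ k, 1 ≤ k ∧ f^[k] v = v)).card : ℝ) *
        ∏ v : V, w v (f v))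
    = 2 * (∑ e ∈ G.edgeFinset, Sym2.lift ⟨w, hsym⟩ e) * treeSum w hsym G := by
  calc
    _ = ∑ f ∈ connectedAdjacencyMaps G, ∑ _v ∈ univ.filter (· ∈ periodicPts f),
          ∏ x, w x (f x) := by
      refine sum_congr rfl fun f _ => ?_
      rw [sum_const, nsmul_eq_mul]
      rfl
    _ = ∑ r ∈ (univ : Finset G.Dart) ×ˢ spanningTrees G,
          w r.1.fst r.1.snd * ∏ e ∈ r.2, Sym2.lift ⟨w, hsym⟩ e := by
      rw [sum_sigma']
      exact sum_sigma_periodicPts_eq_sum_darts_spanningTrees w hsym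
    _ = (∑ d : G.Dart, Sym2.lift ⟨w, hsym⟩ d.edge) * treeSum w hsym G := by
      rw [sum_product, treeSum, sum_mul_sum]
      rfl
    _ = _ := by
      rw [sum_darts_edge, nsmul_eq_mul, Nat.cast_ofNat]

/-- The sum, over all connected adjacency maps `f` of `G`, of (number of periodic
points of `f`) times the weight of `f`, equals
`2 · (Σ_{{u,v} ∈ E} w(u,v)) · F₁(G)`. -/
theorem stmt_6 {V : Type*} [Fintype V] [DecidableEq V]
    (hV : 1 < Fintype.card V)
    (w : V → V → ℝ) (hsym : ∀ u v, w u v = w v u)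
    (hw : ∀ u v, 0 ≤ w u v) (hw0 : ∀ v, w v v = 0)
    (G : SimpleGraph V) (hG : ∀ u v, G.Adj u v ↔ u ≠ v ∧ 0 < w u v)
    (hconn : G.Connected) :
    ∑ f ∈ Finset.univ.filter (fun f : V → V =>
        (∀ v, G.Adj v (f v)) ∧
        (SimpleGraph.fromEdgeSet (Set.range fun v => Sym2.mk v (f v))).Connected),
      (((Finset.univ.filter (fun v : V => ∃ k, 1 ≤ k ∧ f^[k] v = v)).card : ℝ) *
        ∏ v : V, w v (f v))
    = 2 * (∑ e ∈ G.edgeFinset, Sym2.lift ⟨w, hsym⟩ e) * treeSum w hsym G :=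
  stmt_6_general w hsym G
end

section
/- (Biggs's level bounds.) Let G = (V,E) be a finite connected simple graph with at least two vertices and sink s ∈ V. Then every recurrent sandpile configuration σ satisfies 0 ≤ level(σ) ≤ |E| − |V| + 1. -/
open scoped Classical

/-- One toppling step for sandpiles on `G` with sink `s`. -/
def SandTopple {V : Type*} [Fintype V] [DecidableEq V] (G : SimpleGraph V)
    [DecidableRel G.Adj] (s : V) (σ σ' : {v : V // v ≠ s} → ℕ) : Prop :=
  ∃ v : {v : V // v ≠ s}, G.degree (v : V) ≤ σ v ∧
    σ' = fun u => if u = v then σ v - G.degree (v : V)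
                  else σ u + (if G.Adj (u : V) (v : V) then 1 else 0)

/-- A sandpile configuration is stable if every non-sink vertex has fewer grains than
its degree. -/
def SandStable {V : Type*} [Fintype V] [DecidableEq V] (G : SimpleGraph V)
    [DecidableRel G.Adj] (s : V) (σ : {v : V // v ≠ s} → ℕ) : Prop :=
  ∀ v, σ v < G.degree (v : V)

/-- A stable configuration `σ` is recurrent if from any configuration `η` one can add
some configuration `ξ` and topple finitely many times to reach `σ`. -/
def SandRecurrent {V : Type*} [Fintype V] [DecidableEq V] (G : SimpleGraph V)
    [DecidableRel G.Adj] (s : V) (σ : {v : V // v ≠ s} → ℕ) : Prop :=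
  SandStable G s σ ∧
  ∀ η : {v : V // v ≠ s} → ℕ, ∃ ξ : {v : V // v ≠ s} → ℕ,
    Relation.ReflTransGen (SandTopple G s) (η + ξ) σ

/-!
Dhar's burning criterion, in its weak form: a recurrent configuration `σ` has no
forbidden subconfiguration, i.e. no nonempty set `A` of non-sink vertices in which every
`v ∈ A` holds fewer grains than it has neighbours in `A`. Toppling can only destroy forbidden
subconfigurations (a toppled vertex leaves `A`, and the rest of `A` only gains), while a
configuration with at least `deg v` grains everywhere has none; recurrence reaches `σ` from such
a configuration. Removing from any `A` a vertex with `σ v ≥ deg_A v` repeatedly shows that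
`σ` carries at least as many grains as there are edges among the non-sink vertices,
`|E| - deg s`, which is the lower bound. The upper bound is stability summed over `V ∖ {s}`,
together with the handshake lemma.
-/

section Sandpile

open Finset

variable {V : Type*} (G : SimpleGraph V) [DecidableRel G.Adj] (s : V)

noncomputable def degIn (A : Finset {v : V // v ≠ s}) (v : {v : V // v ≠ s}) : ℕ :=
  (A.filter fun u : {v : V // v ≠ s} => G.Adj u v).card

def HasForbiddenSubconfig (σ : {v : V // v ≠ s} → ℕ) : Prop :=
  ∃ A : Finset {v : V // v ≠ s}, A.Nonempty ∧ ∀ v ∈ A, σ v < degIn G s A v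

variable {G s}

lemma degIn_le_degree [Fintype V] (A : Finset {v : V // v ≠ s}) (v : {v : V // v ≠ s}) :
    degIn G s A v ≤ G.degree v := by
  rw [degIn, ← G.card_neighborFinset_eq_degree]
  refine card_le_card_of_injOn Subtype.val (fun u hu => ?_) Subtype.val_injective.injOn
  rw [mem_coe, mem_filter] at hu
  simpa using hu.2.symm

variable [DecidableEq V]

lemma degIn_eq_degIn_erase_add {A : Finset {v : V // v ≠ s}} {w : {v : V // v ≠ s}}
    (hw : w ∈ A) (v : {v : V // v ≠ s}) :
    degIn G s A v = degIn G s (A.erase w) v + if G.Adj w v then 1 else 0 := by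
  rw [degIn, degIn, filter_erase]
  split_ifs with h
  · rw [card_erase_add_one (by simp [hw, h])]
  · rw [erase_eq_of_notMem (by simp [h]), add_zero]

lemma HasForbiddenSubconfig.of_sandTopple [Fintype V] {σ σ' : {v : V // v ≠ s} → ℕ}
    (h : SandTopple G s σ σ') (h' : HasForbiddenSubconfig G s σ') :
    HasForbiddenSubconfig G s σ := by
  obtain ⟨w, -, rfl⟩ := h
  obtain ⟨A, hA, hforb⟩ := h'
  by_cases hwA : w ∈ A
  · refine ⟨A.erase w, ?_, fun v hv => ?_⟩
    · obtain ⟨u, hu⟩ := card_pos.mp (Nat.zero_lt_of_lt (hforb w hwA))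
      rw [mem_filter] at hu
      exact ⟨u, mem_erase.mpr ⟨fun h => G.loopless.irrefl _ (h ▸ hu.2), hu.1⟩⟩
    · have hvw : v ≠ w := ne_of_mem_erase hv
      have := hforb v (mem_of_mem_erase hv)
      rw [degIn_eq_degIn_erase_add hwA] at this
      simp only [if_neg hvw, G.adj_comm (v : V) w] at this
      omega
  · refine ⟨A, hA, fun v hv => ?_⟩
    have := hforb v hv
    simp only [if_neg (ne_of_mem_of_not_mem hv hwA)] at this
    omega

lemma sum_degIn_eq_two_mul_add_sum_erase {A : Finset {v : V // v ≠ s}} {w : {v : V // v ≠ s}}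
    (hw : w ∈ A) :
    ∑ v ∈ A, degIn G s A v =
      2 * degIn G s A w + ∑ v ∈ A.erase w, degIn G s (A.erase w) v := by
  have hself : degIn G s A w = degIn G s (A.erase w) w := by
    simpa using degIn_eq_degIn_erase_add (G := G) hw w
  have hcount : ∑ v ∈ A.erase w, (if G.Adj w v then 1 else 0) = degIn G s (A.erase w) w := by
    simp [sum_boole, degIn, G.adj_comm]
  rw [← add_sum_erase _ _ hw,
    sum_congr rfl fun v _ => degIn_eq_degIn_erase_add hw v, sum_add_distrib, hcount,
    ← hself]
  ring

lemma sum_degIn_le_two_mul_sum {σ : {v : V // v ≠ s} → ℕ}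
    (hσ : ¬ HasForbiddenSubconfig G s σ) (A : Finset {v : V // v ≠ s}) :
    ∑ v ∈ A, degIn G s A v ≤ 2 * ∑ v ∈ A, σ v := by
  induction A using strongInduction with
  | _ A ih =>
    rcases A.eq_empty_or_nonempty with rfl | hA
    · simp
    obtain ⟨w, hw, hσw⟩ : ∃ w ∈ A, degIn G s A w ≤ σ w := by
      by_contra! h
      exact hσ ⟨A, hA, h⟩
    have := ih _ (erase_ssubset hw)
    rw [sum_degIn_eq_two_mul_add_sum_erase hw, ← add_sum_erase _ _ hw]
    omega

variable [Fintype V]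

lemma HasForbiddenSubconfig.of_reflTransGen {σ σ' : {v : V // v ≠ s} → ℕ}
    (h : Relation.ReflTransGen (SandTopple G s) σ σ') (h' : HasForbiddenSubconfig G s σ') :
    HasForbiddenSubconfig G s σ := by
  induction h using Relation.ReflTransGen.head_induction_on with
  | refl => exact h'
  | head hstep _ ih => exact ih.of_sandTopple hstep

lemma SandRecurrent.not_hasForbiddenSubconfig {σ : {v : V // v ≠ s} → ℕ}
    (hσ : SandRecurrent G s σ) : ¬ HasForbiddenSubconfig G s σ := by
  intro hforb
  obtain ⟨ξ, hpath⟩ := hσ.2 fun v => G.degree v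
  obtain ⟨A, ⟨v, hv⟩, hlt⟩ := hforb.of_reflTransGen hpath
  have hv := hlt v hv
  simp only [Pi.add_apply] at hv
  have := degIn_le_degree (G := G) A v
  omega

lemma degIn_univ_add_ite_adj_sink (v : {v : V // v ≠ s}) :
    degIn G s univ v + (if G.Adj v s then 1 else 0) = G.degree v := by
  have hmap : (univ.filter fun u : {v : V // v ≠ s} => G.Adj u v).map
      (Function.Embedding.subtype _) = (G.neighborFinset v).erase s := by
    ext u
    simp [G.adj_comm, and_comm]
  rw [degIn, ← card_map, hmap, ← G.card_neighborFinset_eq_degree]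
  split_ifs with h
  · exact card_erase_add_one (by simpa)
  · rw [erase_eq_of_notMem (by simpa), add_zero]

variable (G s) in
lemma degree_add_sum_degree_nonSink :
    G.degree s + ∑ v : {v : V // v ≠ s}, G.degree v = 2 * #G.edgeFinset := by
  rw [← G.sum_degrees_eq_twice_card_edges,
    Fintype.sum_eq_add_sum_subtype_ne (fun v => G.degree v) s]

lemma sum_degIn_univ_add_two_mul_degree_sink :
    ∑ v, degIn G s univ v + 2 * G.degree s = 2 * #G.edgeFinset := by
  have hsink : ∑ v : {v : V // v ≠ s}, (if G.Adj v s then 1 else 0) = G.degree s := by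
    rw [← G.card_neighborFinset_eq_degree, G.neighborFinset_eq_filter, card_filter,
      Fintype.sum_eq_add_sum_subtype_ne _ s]
    simp [G.adj_comm]
  rw [← degree_add_sum_degree_nonSink,
    ← sum_congr rfl fun v _ => degIn_univ_add_ite_adj_sink v, sum_add_distrib, hsink]
  ring

lemma SandStable.sum_add_card_le {σ : {v : V // v ≠ s} → ℕ} (hσ : SandStable G s σ) :
    ∑ v, σ v + Fintype.card {v : V // v ≠ s} ≤ ∑ v : {v : V // v ≠ s}, G.degree v := by
  calc ∑ v, σ v + Fintype.card {v : V // v ≠ s} = ∑ v, (σ v + 1) := by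
        simp [sum_add_distrib]
    _ ≤ _ := sum_le_sum fun v _ => hσ v

lemma SandRecurrent.card_edgeFinset_le {σ : {v : V // v ≠ s} → ℕ}
    (hσ : SandRecurrent G s σ) :
    #G.edgeFinset ≤ ∑ v, σ v + G.degree s := by
  have := sum_degIn_le_two_mul_sum hσ.not_hasForbiddenSubconfig univ
  have := sum_degIn_univ_add_two_mul_degree_sink (G := G) (s := s)
  omega

end Sandpile

theorem stmt_15_general {V : Type*} [Fintype V] [DecidableEq V] (G : SimpleGraph V)
    [DecidableRel G.Adj] (s : V)
    (σ : {v : V // v ≠ s} → ℕ) (hσ : SandRecurrent G s σ) :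
    0 ≤ (∑ v : {v : V // v ≠ s}, (σ v : ℤ)) - G.edgeFinset.card + G.degree s ∧
    (∑ v : {v : V // v ≠ s}, (σ v : ℤ)) - G.edgeFinset.card + G.degree s
      ≤ (G.edgeFinset.card : ℤ) - Fintype.card V + 1 := by
  have hlower := hσ.card_edgeFinset_le
  have hupper := hσ.1.sum_add_card_le
  have hdegree := degree_add_sum_degree_nonSink G s
  have hcard : 1 + Fintype.card {v : V // v ≠ s} = Fintype.card V := by
    rw [Fintype.card_eq_sum_ones, Fintype.card_eq_sum_ones, Fintype.sum_eq_add_sum_subtype_ne _ s]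
  rw [← Nat.cast_sum]
  omega

/-- **Biggs's level bounds.**  Every recurrent sandpile configuration `σ` on a finite
connected simple graph with at least two vertices satisfies
`0 ≤ level(σ) ≤ |E| − |V| + 1`, where `level(σ) = Σ_v σ(v) − |E| + deg(s)`. -/
theorem stmt_15 {V : Type*} [Fintype V] [DecidableEq V] (G : SimpleGraph V)
    [DecidableRel G.Adj] (s : V)
    (hV : 1 < Fintype.card V) (hconn : G.Connected)
    (σ : {v : V // v ≠ s} → ℕ) (hσ : SandRecurrent G s σ) :
    0 ≤ (∑ v : {v : V // v ≠ s}, (σ v : ℤ)) - G.edgeFinset.card + G.degree s ∧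
    (∑ v : {v : V // v ≠ s}, (σ v : ℤ)) - G.edgeFinset.card + G.degree s
      ≤ (G.edgeFinset.card : ℤ) - Fintype.card V + 1 :=
  stmt_15_general G s σ hσ
end

section
/- For every real number c > 1, ∫₀¹ √( (1 − cos(2πt)) / (c − cos(2πt)) ) dt = (2/π) · arcsin( √(2/(c+1)) ). -/
/-!
With `k = √(2/(c+1))` one has `1 - cos 2x = 2 sin² x` and `c - cos 2x = (c+1)(1 - k² cos² x)`, so on
`[0, π]` the integrand `√((1 - cos 2x)/(c - cos 2x))` equals `k sin x / √(1 - k² cos² x)`, the derivative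
of `-arcsin (k cos x)`. Hence `t ↦ -arcsin (k cos πt) / π` is an antiderivative on `[0, 1]`, and the
integral is `(arcsin k - arcsin (-k)) / π = (2/π) arcsin k`.
-/

open Real intervalIntegral

lemma hasDerivAt_arcsin_mul_cos {k : ℝ} (hk : |k| < 1) (a t : ℝ) :
    HasDerivAt (fun s => arcsin (k * cos (a * s)))
      (-(k * sin (a * t) / √(1 - (k * cos (a * t)) ^ 2) * a)) t := by
  have hlt : |k * cos (a * t)| < 1 := by
    rw [abs_mul]
    exact (mul_le_of_le_one_right (abs_nonneg k) (abs_cos_le_one _)).trans_lt hk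
  have hcos : HasDerivAt (fun s => k * cos (a * s)) (k * (-sin (a * t) * a)) t :=
    (((hasDerivAt_id t).const_mul a).cos.const_mul k).congr_deriv (by simp)
  refine ((hasDerivAt_arcsin (abs_lt.1 hlt).1.ne' (abs_lt.1 hlt).2.ne).comp t hcos).congr_deriv ?_
  ring

lemma sqrt_one_sub_cos_two_mul_div_sub_cos_two_mul {c x : ℝ} (hc : 0 < c + 1) (hx : 0 ≤ sin x) :
    √((1 - cos (2 * x)) / (c - cos (2 * x)))
      = √(2 / (c + 1)) * sin x / √(1 - (√(2 / (c + 1)) * cos x) ^ 2) := by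
  have hk : √(2 / (c + 1)) ^ 2 * (c + 1) = 2 := by
    rw [sq_sqrt (div_nonneg zero_le_two hc.le), div_mul_cancel₀ _ hc.ne']
  have hnum : (√(2 / (c + 1)) * sin x) ^ 2 * (c + 1) = 1 - cos (2 * x) := by
    linear_combination sin x ^ 2 * hk + cos_two_mul' x + cos_sq' x
  have hden : (1 - (√(2 / (c + 1)) * cos x) ^ 2) * (c + 1) = c - cos (2 * x) := by
    linear_combination -cos x ^ 2 * hk + cos_two_mul x
  rw [← hnum, ← hden, mul_div_mul_right _ _ hc.ne', sqrt_div (sq_nonneg _),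
    sqrt_sq (mul_nonneg (sqrt_nonneg _) hx)]

/-- For every real `c > 1`,
`∫₀¹ √((1 − cos(2πt))/(c − cos(2πt))) dt = (2/π)·arcsin(√(2/(c+1)))`. -/
theorem stmt_17 (c : ℝ) (hc : 1 < c) :
    ∫ t in (0:ℝ)..1,
        Real.sqrt ((1 - Real.cos (2 * Real.pi * t)) / (c - Real.cos (2 * Real.pi * t)))
      = (2 / Real.pi) * Real.arcsin (Real.sqrt (2 / (c + 1))) := by
  set k := √(2 / (c + 1))
  have hk : |k| < 1 := by
    rw [abs_of_nonneg (sqrt_nonneg _), sqrt_lt' one_pos, one_pow, div_lt_one (by linarith)]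
    linarith
  have hderiv : ∀ t ∈ Set.uIcc (0:ℝ) 1, HasDerivAt (fun s => -arcsin (k * cos (π * s)) / π)
      (√((1 - cos (2 * π * t)) / (c - cos (2 * π * t)))) t := by
    intro t ht
    rw [Set.uIcc_of_le zero_le_one] at ht
    have hsin : 0 ≤ sin (π * t) := sin_nonneg_of_nonneg_of_le_pi (by nlinarith [pi_pos, ht.1])
      (by nlinarith [pi_pos, ht.2])
    refine ((hasDerivAt_arcsin_mul_cos hk π t).neg.div_const π).congr_deriv ?_
    rw [mul_assoc, sqrt_one_sub_cos_two_mul_div_sub_cos_two_mul (by linarith) hsin, neg_neg, mul_div_cancel_right₀ _ pi_ne_zero]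
  have hcont : Continuous fun t => √((1 - cos (2 * π * t)) / (c - cos (2 * π * t))) :=
    (Continuous.div (by fun_prop) (by fun_prop)
      fun t => by linarith [cos_le_one (2 * π * t)]).sqrt
  rw [integral_eq_sub_of_hasDerivAt hderiv (hcont.intervalIntegrable 0 1)]
  simp only [mul_one, mul_zero, cos_pi, cos_zero, mul_neg, arcsin_neg]
  ring
end

section
/- For every real number β > 0, 2 · ∫₀¹ ∫₀¹ (2 − 2cos(2πs)) / ( 16β + 12 − (4β+2)·(2cos(2πt) + 2cos(2πs)) − 4·cos(2πt)·cos(2πs) ) dt ds = arccos(1/(2β+1)) / (2π·√(β² + β)). (This is the evaluation of the potential kernel α(β) between two adjacent degree-8 vertices of the tetrakis square lattice with edge weight β on the edges joining degree-8 vertices; note arccos(1/(2β+1)) = arcsec(2β+1).) -/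
open Real Set Filter Topology intervalIntegral

/-!
Since `cos 2πt = cos² πt - sin² πt`, the inner integrand is `4 sin² πs / (a cos² πt + b sin² πt)`
with `a = 16 (β + 1) sin² πs` and `b = 16 (2β + 1 - β cos² πs)`, and the substitution
`u = √(b / a) tan πt` gives `∫₀¹ dt / (a cos² πt + b sin² πt) = 1 / √(ab)`. What remains is
`∫₀¹ sin πs / √(2β + 1 - β cos² πs) ds`, whose antiderivative is `-arcsin (m cos πs) / (π √β)`
with `m² = β / (2β + 1)`; finally `2 arcsin m = arccos (1 - 2m²) = arccos (1 / (2β + 1))`.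
-/

lemma cos_sq_add_sin_sq_pos {a b : ℝ} (ha : 0 < a) (hb : 0 < b) (x : ℝ) :
    0 < a * cos x ^ 2 + b * sin x ^ 2 := by
  have hmin : 0 < min a b := lt_min ha hb
  nlinarith [sin_sq_add_cos_sq x,
    mul_le_mul_of_nonneg_right (min_le_left a b) (sq_nonneg (cos x)),
    mul_le_mul_of_nonneg_right (min_le_right a b) (sq_nonneg (sin x))]

lemma hasDerivAt_arctan_mul_tan (k : ℝ) {x : ℝ} (hx : cos x ≠ 0) :
    HasDerivAt (fun x => arctan (k * tan x)) (k / (cos x ^ 2 + k ^ 2 * sin x ^ 2)) x := by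
  convert ((hasDerivAt_tan hx).const_mul k).arctan using 1
  rw [tan_eq_sin_div_cos]
  field_simp

lemma integral_inv_cos_sq_add_sin_sq_half_pi {a b : ℝ} (ha : 0 < a) (hb : 0 < b) :
    ∫ x in (0:ℝ)..π / 2, 1 / (a * cos x ^ 2 + b * sin x ^ 2) = π / (2 * √(a * b)) := by
  set k := √(b / a)
  have hk : 0 < k := sqrt_pos.mpr (div_pos hb ha)
  have hk_sq : k ^ 2 = b / a := sq_sqrt (div_pos hb ha).le
  have hab : √(a * b) = a * k := by
    rw [show a * b = a ^ 2 * (b / a) by field_simp, sqrt_mul (sq_nonneg a), sqrt_sq ha.le]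
  have hderiv : ∀ x ∈ Ioo 0 (π / 2), HasDerivAt (fun x => arctan (k * tan x) / √(a * b))
      (1 / (a * cos x ^ 2 + b * sin x ^ 2)) x := by
    intro x hx
    have hcos : cos x ≠ 0 := (cos_pos_of_mem_Ioo ⟨by linarith [hx.1, pi_pos], hx.2⟩).ne'
    refine ((hasDerivAt_arctan_mul_tan k hcos).div_const (√(a * b))).congr_deriv ?_
    rw [hab, show b = a * k ^ 2 by rw [hk_sq]; field_simp]
    field_simp
  have hcont : Continuous fun x => 1 / (a * cos x ^ 2 + b * sin x ^ 2) :=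
    continuous_const.div (by fun_prop) fun x => (cos_sq_add_sin_sq_pos ha hb x).ne'
  have h0 : Tendsto (fun x => arctan (k * tan x) / √(a * b)) (𝓝[>] 0) (𝓝 0) := by
    have : ContinuousAt (fun x => arctan (k * tan x) / √(a * b)) 0 :=
      (continuous_arctan.continuousAt.comp
        ((continuousAt_tan.mpr (by simp)).const_mul k)).div_const _
    simpa using this.tendsto.mono_left nhdsWithin_le_nhds
  have hπ2 : Tendsto (fun x => arctan (k * tan x) / √(a * b)) (𝓝[<] (π / 2))
      (𝓝 (π / 2 / √(a * b))) :=
    ((tendsto_arctan_atTop.mono_right nhdsWithin_le_nhds).comp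
      (tendsto_tan_pi_div_two.const_mul_atTop hk)).div_const _
  rw [integral_eq_sub_of_hasDerivAt_of_tendsto (by positivity) hderiv
    (hcont.intervalIntegrable _ _) h0 hπ2]
  ring

lemma integral_inv_cos_sq_add_sin_sq_pi {a b : ℝ} (ha : 0 < a) (hb : 0 < b) :
    ∫ x in (0:ℝ)..π, 1 / (a * cos x ^ 2 + b * sin x ^ 2) = π / √(a * b) := by
  set f := fun x => 1 / (a * cos x ^ 2 + b * sin x ^ 2)
  have hf : Continuous f :=
    continuous_const.div (by fun_prop) fun x => (cos_sq_add_sin_sq_pos ha hb x).ne'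
  have hreflect : ∫ x in π / 2..π, f x = ∫ x in (0:ℝ)..π / 2, f x := by
    have h := integral_comp_sub_left (a := 0) (b := π / 2) f π
    rw [sub_zero, sub_half] at h
    rw [← h]
    simp only [f, cos_pi_sub, sin_pi_sub, neg_sq]
  rw [← integral_add_adjacent_intervals (b := π / 2) (hf.intervalIntegrable _ _)
    (hf.intervalIntegrable _ _), hreflect, integral_inv_cos_sq_add_sin_sq_half_pi ha hb]
  ring

lemma integral_inv_cos_sq_add_sin_sq_pi_mul {a b : ℝ} (ha : 0 < a) (hb : 0 < b) :
    ∫ t in (0:ℝ)..1, 1 / (a * cos (π * t) ^ 2 + b * sin (π * t) ^ 2) = 1 / √(a * b) := by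
  rw [integral_comp_mul_left (fun x => 1 / (a * cos x ^ 2 + b * sin x ^ 2)) pi_ne_zero,
    mul_zero, mul_one, integral_inv_cos_sq_add_sin_sq_pi ha hb, smul_eq_mul]
  field_simp

lemma cos_two_mul_pi_mul (x : ℝ) : cos (2 * π * x) = 2 * cos (π * x) ^ 2 - 1 := by
  rw [mul_assoc, cos_two_mul]

lemma integral_tetrakis_kernel_inner {β : ℝ} (hβ : 0 < β) {s : ℝ} (hs : 0 ≤ sin (π * s)) :
    ∫ t in (0:ℝ)..1, (2 - 2 * cos (2 * π * s)) /
        (16 * β + 12 - (4 * β + 2) * (2 * cos (2 * π * t) + 2 * cos (2 * π * s))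
          - 4 * cos (2 * π * t) * cos (2 * π * s))
      = 1 / (4 * √(β + 1)) * (sin (π * s) / √(2 * β + 1 - β * cos (π * s) ^ 2)) := by
  have hpyth_s := sin_sq_add_cos_sq (π * s)
  have hnum : 2 - 2 * cos (2 * π * s) = 4 * sin (π * s) ^ 2 := by
    rw [cos_two_mul_pi_mul]; linear_combination -4 * hpyth_s
  rcases hs.eq_or_lt with hσ | hσ
  · simp [hnum, ← hσ]
  set a := 16 * (β + 1) * sin (π * s) ^ 2
  set Q := 2 * β + 1 - β * cos (π * s) ^ 2
  have hQ : 0 < Q := by nlinarith [cos_sq_le_one (π * s)]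
  have hdenom : ∀ t, 16 * β + 12 - (4 * β + 2) * (2 * cos (2 * π * t) + 2 * cos (2 * π * s))
        - 4 * cos (2 * π * t) * cos (2 * π * s)
      = a * cos (π * t) ^ 2 + 16 * Q * sin (π * t) ^ 2 := by
    intro t
    rw [cos_two_mul_pi_mul, cos_two_mul_pi_mul]
    linear_combination
      -16 * Q * sin_sq_add_cos_sq (π * t) - 16 * (β + 1) * cos (π * t) ^ 2 * hpyth_s
  have hsqrt : √(a * (16 * Q)) = 16 * sin (π * s) * √(β + 1) * √Q := by
    rw [show a * (16 * Q) = (16 * sin (π * s)) ^ 2 * (β + 1) * Q by ring,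
      sqrt_mul (by positivity), sqrt_mul (by positivity), sqrt_sq (by positivity)]
  simp_rw [hdenom, hnum, div_eq_mul_one_div (4 * sin (π * s) ^ 2)]
  rw [integral_const_mul, integral_inv_cos_sq_add_sin_sq_pi_mul (by positivity) (by positivity),
    hsqrt]
  field_simp
  norm_num

lemma integral_sin_div_sqrt_sub_mul_cos_sq {p q : ℝ} (hq : 0 < q) (hqp : q < p) :
    ∫ s in (0:ℝ)..1, sin (π * s) / √(p - q * cos (π * s) ^ 2)
      = 2 * arcsin √(q / p) / (π * √q) := by
  have hp : 0 < p := hq.trans hqp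
  set m := √(q / p)
  have hm : 0 < m := sqrt_pos.mpr (div_pos hq hp)
  have hm_sq : m ^ 2 = q / p := sq_sqrt (div_pos hq hp).le
  have hm_lt : m < 1 := by
    rw [sqrt_lt' one_pos, one_pow, div_lt_one hp]; exact hqp
  have hmp : m * √p = √q := by
    rw [← sqrt_mul (div_pos hq hp).le, div_mul_cancel₀ _ hp.ne']
  have hpos : ∀ s, 0 < p - q * cos (π * s) ^ 2 := fun s => by
    nlinarith [cos_sq_le_one (π * s)]
  have hderiv : ∀ s ∈ uIcc (0:ℝ) 1, HasDerivAt (fun s => arcsin (m * cos (π * s)) / -(π * √q))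
      (sin (π * s) / √(p - q * cos (π * s) ^ 2)) s := by
    intro s _
    have hmc : |m * cos (π * s)| < 1 := by
      rw [abs_mul, abs_of_pos hm]
      nlinarith [abs_cos_le_one (π * s)]
    have hlin : HasDerivAt (fun s => m * cos (π * s)) (m * (-sin (π * s) * π)) s := by
      simpa using
        ((hasDerivAt_cos (π * s)).comp s ((hasDerivAt_id s).const_mul π)).const_mul m
    refine (((hasDerivAt_arcsin (abs_lt.mp hmc).1.ne' (abs_lt.mp hmc).2.ne).comp s
      hlin).div_const _).congr_deriv ?_
    have hsplit : √(p - q * cos (π * s) ^ 2) = √p * √(1 - (m * cos (π * s)) ^ 2) := by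
      rw [← sqrt_mul hp.le, mul_pow, hm_sq]
      congr 1
      field_simp
    rw [hsplit, ← hmp]
    field_simp
  have hcont : Continuous fun s => sin (π * s) / √(p - q * cos (π * s) ^ 2) :=
    (by fun_prop : Continuous _).div (by fun_prop) fun s => (sqrt_pos.mpr (hpos s)).ne'
  rw [integral_eq_sub_of_hasDerivAt hderiv (hcont.intervalIntegrable _ _)]
  simp only [mul_one, mul_zero, cos_pi, cos_zero, mul_neg, arcsin_neg]
  field_simp
  ring

lemma arccos_one_sub_two_mul_sq {m : ℝ} (h0 : 0 ≤ m) (h1 : m ≤ 1) :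
    arccos (1 - 2 * m ^ 2) = 2 * arcsin m := by
  refine arccos_eq_of_eq_cos (by linarith [arcsin_nonneg.mpr h0])
    (by linarith [arcsin_le_pi_div_two m]) ?_
  rw [cos_two_mul, cos_sq', sin_arcsin (by linarith) h1]
  ring

/-- For every real `β > 0`,
`2·∫₀¹∫₀¹ (2 − 2cos(2πs)) / (16β + 12 − (4β+2)(2cos(2πt) + 2cos(2πs)) −
4cos(2πt)cos(2πs)) dt ds = arccos(1/(2β+1)) / (2π√(β² + β))`. -/
theorem stmt_18 (β : ℝ) (hβ : 0 < β) :
    2 * ∫ s in (0:ℝ)..1, ∫ t in (0:ℝ)..1,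
        (2 - 2 * Real.cos (2 * Real.pi * s)) /
          (16 * β + 12
            - (4 * β + 2) * (2 * Real.cos (2 * Real.pi * t) + 2 * Real.cos (2 * Real.pi * s))
            - 4 * Real.cos (2 * Real.pi * t) * Real.cos (2 * Real.pi * s))
      = Real.arccos (1 / (2 * β + 1)) / (2 * Real.pi * Real.sqrt (β ^ 2 + β)) := by
  have hinner := fun s (hs : s ∈ uIcc (0:ℝ) 1) => by
    rw [uIcc_of_le zero_le_one] at hs
    exact integral_tetrakis_kernel_inner hβ
      (sin_nonneg_of_nonneg_of_le_pi (mul_nonneg pi_pos.le hs.1)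
        (mul_le_of_le_one_right pi_pos.le hs.2))
  have hm_sq : √(β / (2 * β + 1)) ^ 2 = β / (2 * β + 1) := sq_sqrt (by positivity)
  have harccos : arccos (1 / (2 * β + 1)) = 2 * arcsin √(β / (2 * β + 1)) := by
    rw [← arccos_one_sub_two_mul_sq (sqrt_nonneg _) (sqrt_le_one.mpr
      ((div_le_one (by positivity)).mpr (by linarith))), hm_sq]
    congr 1
    field_simp
    ring
  rw [integral_congr hinner, integral_const_mul,
    integral_sin_div_sqrt_sub_mul_cos_sq hβ (by linarith), harccos,
    show β ^ 2 + β = β * (β + 1) by ring, sqrt_mul hβ.le]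
  field_simp
  ring
end
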